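/- In G_n, the unique player 0 strategy σ for which the play from every starting node a_i under σ and any optimal player 1 response passes through d_{n+1} is given by σ(a_i)=a_{i+1} for i<n and σ(a_n)=d_{n+1}; it differs from the initial strategy σ_0 in exactly one edge. -/

import Mathlib

structure PGame (V : Type) where
  E : V → V → Prop
  isP0 : V → Bool
  p : V → ℤ

namespace PGame

variable {V : Type}

/-- A valid positional strategy for player 0: at every player-0 node it follows an edge. -/
def Strat0Valid (G : PGame V) (σ : V → V) : Prop := ∀ v, G.isP0 v = true → G.E v (σ v)

/-- A valid positional strategy for player 1. -/
def Strat1Valid (G : PGame V) (τ : V → V) : Prop := ∀ v, G.isP0 v = false → G.E v (τ v)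

/-- Edges of the subgraph where player 0 follows `σ` (player 1 keeps all edges). -/
def E0 (G : PGame V) (σ : V → V) (v w : V) : Prop :=
  if G.isP0 v then w = σ v else G.E v w

/-- Edges of the subgraph where player 1 follows `τ` (player 0 keeps all edges). -/
def E1 (G : PGame V) (τ : V → V) (v w : V) : Prop :=
  if G.isP0 v then G.E v w else w = τ v

/-- A cycle of length `k` (given by a `k`-periodic sequence) in the relation `R`. -/
def IsCycle (R : V → V → Prop) (k : ℕ) (c : ℕ → V) : Prop :=
  0 < k ∧ (∀ i, R (c i) (c (i + 1))) ∧ ∀ i, c (i + k) = c i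

/-- The highest priority occurring on the (periodic) cycle `c` is even. -/
def TopEven (G : PGame V) (c : ℕ → V) : Prop :=
  ∃ i, Even (G.p (c i)) ∧ ∀ j, G.p (c j) ≤ G.p (c i)

/-- The highest priority occurring on the (periodic) cycle `c` is odd. -/
def TopOdd (G : PGame V) (c : ℕ → V) : Prop :=
  ∃ i, Odd (G.p (c i)) ∧ ∀ j, G.p (c j) ≤ G.p (c i)

/-- `σ` is an admissible player 0 strategy: valid, and every cycle avoiding the sink
in the subgraph where player 0 follows `σ` has even highest priority. -/
def Admissible0 (G : PGame V) (top : V) (σ : V → V) : Prop :=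
  G.Strat0Valid σ ∧ ∀ k c, IsCycle (G.E0 σ) k c → (∀ i, c i ≠ top) → G.TopEven c

/-- `τ` is an admissible player 1 strategy. -/
def Admissible1 (G : PGame V) (top : V) (τ : V → V) : Prop :=
  G.Strat1Valid τ ∧ ∀ k c, IsCycle (G.E1 τ) k c → (∀ i, c i ≠ top) → G.TopOdd c

/-- `top` is a sink node: unique smallest priority and only the self-loop as outgoing edge. -/
def IsSink (G : PGame V) (top : V) : Prop :=
  (∀ v, v ≠ top → G.p top < G.p v) ∧ (∀ w, G.E top w ↔ w = top)

/-- A sink parity game. -/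
def IsSinkGame (G : PGame V) (top : V) : Prop :=
  G.IsSink top ∧ (∃ σ, G.Admissible0 top σ) ∧ (∃ τ, G.Admissible1 top τ)

/-- One move when both players play their positional strategies. -/
def step (G : PGame V) (σ τ : V → V) (v : V) : V := if G.isP0 v then σ v else τ v

/-- The play from `v` under the strategies `σ`, `τ`. -/
def play (G : PGame V) (σ τ : V → V) (v : V) (n : ℕ) : V := (G.step σ τ)^[n] v

end PGame
/-- Play values: `-∞`, a nonnegative integer vector indexed by priorities, or `∞`. -/
inductive EV : Type where
  | neg : EV
  | fin : (ℤ → ℕ) → EV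
  | pos : EV

/-- The strict comparison `B ◁ C` on vectors: at the largest priority `q` where they differ,
either `q` is even and `B q < C q`, or `q` is odd and `B q > C q`. -/
def vlt (B C : ℤ → ℕ) : Prop :=
  ∃ q : ℤ, B q ≠ C q ∧ (∀ r : ℤ, q < r → B r = C r) ∧
    ((Even q ∧ B q < C q) ∨ (Odd q ∧ C q < B q))

/-- The strict order `◁` extended with `-∞` as least and `∞` as greatest element. -/
def elt : EV → EV → Prop
  | EV.neg, EV.neg => False
  | EV.neg, _ => True
  | EV.fin B, EV.fin C => vlt B C
  | EV.fin _, EV.pos => True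
  | _, _ => False

/-- The non-strict order `⊴`. -/
def ele (x y : EV) : Prop := elt x y ∨ x = y

/-- Priority `q` is seen infinitely often along the play from `v`. -/
def InfOft {V : Type} (G : PGame V) (σ τ : V → V) (v : V) (q : ℤ) : Prop :=
  ∀ n, ∃ m, n ≤ m ∧ G.p (G.play σ τ v m) = q

open Classical in
/-- The play value `Θ_{σ,τ}(v)`: if the play reaches the sink `top`, the vector counting
for each priority how often it occurs before reaching `top`; otherwise `∞` or `-∞`
according to the parity of the highest priority seen infinitely often. -/
noncomputable def theta {V : Type} (G : PGame V) (top : V) (σ τ : V → V) (v : V) : EV :=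
  if h : ∃ n, G.play σ τ v n = top then
    EV.fin (fun q => ((Finset.range (Nat.find h)).filter
      (fun j => G.p (G.play σ τ v j) = q)).card)
  else if ∃ q, InfOft G σ τ v q ∧ Even q ∧ ∀ q', InfOft G σ τ v q' → q' ≤ q
    then EV.pos else EV.neg

/-- `τbar` is an optimal counterstrategy of player 1 against `σ`: it minimizes `Θ_{σ,·}`
pointwise with respect to `⊴`. The valuation is `Ξ_σ = Θ_{σ,τbar}`. -/
def OptCounter1 {V : Type} (G : PGame V) (top : V) (σ τbar : V → V) : Prop :=
  G.Strat1Valid τbar ∧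
    ∀ τ, G.Strat1Valid τ → ∀ v, ele (theta G top σ τbar v) (theta G top σ τ v)

/-- `σbar` is an optimal counterstrategy of player 0 against `τ`: it maximizes `Θ_{·,τ}`
pointwise with respect to `⊴`. The valuation is `Ξ_τ = Θ_{σbar,τ}`. -/
def OptCounter0 {V : Type} (G : PGame V) (top : V) (τ σbar : V → V) : Prop :=
  G.Strat0Valid σbar ∧
    ∀ σ, G.Strat0Valid σ → ∀ v, ele (theta G top σ τ v) (theta G top σbar τ v)
/-- Nodes of the game `G_n`: `(true, i)` is `a_i`, `(false, i)` is `d_i` (for `1 ≤ i ≤ n+1`);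
other indices are junk nodes that just move to the sink `a_{n+1}`. -/
abbrev VN : Type := Bool × ℕ

/-- Priorities of `G_n`: `p(a_i) = 2i+1` for `i ≤ n`, `p(a_{n+1}) = 1`,
`p(d_i) = 2i+2` (so `p(d_{n+1}) = 2n+4`). -/
def pN (n : ℕ) : VN → ℤ
  | (true, i) => if 1 ≤ i ∧ i ≤ n then 2 * (i : ℤ) + 1 else 1
  | (false, i) => if 1 ≤ i ∧ i ≤ n + 1 then 2 * (i : ℤ) + 2 else 1

/-- Edges of `G_n`: `a_1 → a_2, d_2`; `a_i → a_1, a_{i+1}, d_{i+1}` for `2 ≤ i ≤ n`;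
`a_{n+1} → a_{n+1}` (sink); `d_1 → a_2, d_2`; `d_i → d_1, a_{i+1}, d_{i+1}` for `2 ≤ i ≤ n`;
`d_{n+1} → a_{n+1}`. -/
def EN (n : ℕ) : VN → VN → Prop
  | (true, i), w =>
      if i = n + 1 then w = (true, n + 1)
      else if i = 1 then w = (true, 2) ∨ w = (false, 2)
      else if 2 ≤ i ∧ i ≤ n then w = (true, 1) ∨ w = (true, i + 1) ∨ w = (false, i + 1)
      else w = (true, n + 1)
  | (false, i), w =>
      if i = n + 1 then w = (true, n + 1)
      else if i = 1 then w = (true, 2) ∨ w = (false, 2)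
      else if 2 ≤ i ∧ i ≤ n then w = (false, 1) ∨ w = (true, i + 1) ∨ w = (false, i + 1)
      else w = (true, n + 1)

/-- The game `G_n`: `a`-nodes belong to player 0, `d`-nodes to player 1. -/
def GameN (n : ℕ) : PGame VN := ⟨EN n, Prod.fst, pN n⟩

/-- The initial player 0 strategy: `σ₀(a_i) = a_{i+1}` for `i ≤ n`, `σ₀(a_{n+1}) = a_{n+1}`. -/
def sigma0 (n : ℕ) : VN → VN
  | (true, i) => if 1 ≤ i ∧ i ≤ n then (true, i + 1) else (true, n + 1)
  | (false, _) => (true, n + 1)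

/-- The initial player 1 strategy: `τ₀(d_i) = d_{i+1}` for `i ≤ n`, `τ₀(d_{n+1}) = a_{n+1}`. -/
def tau0 (n : ℕ) : VN → VN
  | (false, i) => if 1 ≤ i ∧ i ≤ n then (false, i + 1) else (true, n + 1)
  | (true, _) => (true, n + 1)

/-- The optimal player 0 strategy of `G_n`: `σ*(a_i) = a_{i+1}` for `i < n` and
`σ*(a_n) = d_{n+1}`. -/
def sigmaStar (n : ℕ) : VN → VN
  | (true, i) =>
      if 1 ≤ i ∧ i < n then (true, i + 1)
      else if i = n then (false, n + 1)
      else (true, n + 1)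
  | (false, _) => (true, n + 1)


/-!
Fix `σ`. Every node has a least play value over all player 1 strategies: the values form a
finite set, linearly ordered by `⊴`. Moving so as to realise these least values is optimal
for player 1, except that such moves might close even cycles among nodes of value `-∞`; on
those nodes player 1 instead follows one strategy winning `-∞` on all of them at once, obtained
by merging finitely many strategies.

Against an optimal counterstrategy, a play from `a_1` that reaches `d_{n+1}` never enters a
free node `d_k` first, since from there player 1 can reach the sink avoiding the unique largest
priority `2n + 4`, which is even; and it never returns to `a_1`, since it would then cycle.
So it climbs `a_1 → a_2 → ⋯ → a_n → d_{n+1}`, which pins `σ` down to `σ*`.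
-/
namespace EV

lemma vlt_irrefl (B : ℤ → ℕ) : ¬ vlt B B := fun ⟨_, h, _⟩ => h rfl

lemma vlt_trans {B C D : ℤ → ℕ} (h₁ : vlt B C) (h₂ : vlt C D) : vlt B D := by
  obtain ⟨q₁, hne₁, habove₁, hcmp₁⟩ := h₁
  obtain ⟨q₂, hne₂, habove₂, hcmp₂⟩ := h₂
  rcases lt_trichotomy q₁ q₂ with h | rfl | h
  · refine ⟨q₂, habove₁ q₂ h ▸ hne₂, fun r hr => (habove₁ r (h.trans hr)).trans (habove₂ r hr),
      habove₁ q₂ h ▸ hcmp₂⟩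
  · have habove : ∀ r, q₁ < r → B r = D r := fun r hr => (habove₁ r hr).trans (habove₂ r hr)
    rcases hcmp₁ with ⟨he, h₁⟩ | ⟨ho, h₁⟩ <;> rcases hcmp₂ with ⟨he', h₂⟩ | ⟨ho', h₂⟩
    · exact ⟨q₁, by omega, habove, Or.inl ⟨he, h₁.trans h₂⟩⟩
    · exact absurd ho' (Int.not_odd_iff_even.mpr he)
    · exact absurd ho (Int.not_odd_iff_even.mpr he')
    · exact ⟨q₁, by omega, habove, Or.inr ⟨ho, h₂.trans h₁⟩⟩
  · refine ⟨q₁, (habove₂ q₁ h).symm ▸ hne₁,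
      fun r hr => (habove₁ r hr).trans (habove₂ r (h.trans hr)), (habove₂ q₁ h) ▸ hcmp₁⟩

lemma elt_irrefl : ∀ x : EV, ¬ elt x x
  | neg => id
  | fin B => vlt_irrefl B
  | pos => id

lemma elt_trans {x y z : EV} (h₁ : elt x y) (h₂ : elt y z) : elt x z := by
  cases x <;> cases y <;> cases z <;> first | exact vlt_trans h₁ h₂ | simp_all [elt]

instance : PartialOrder EV where
  le := ele
  lt := elt
  le_refl _ := Or.inr rfl
  le_trans _ _ _
    | Or.inl h₁, Or.inl h₂ => Or.inl (elt_trans h₁ h₂)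
    | h₁, Or.inr rfl => h₁
    | Or.inr rfl, h₂ => h₂
  lt_iff_le_not_ge := fun x y => by
    refine ⟨fun h => ⟨Or.inl h, ?_⟩, fun ⟨h₁, h₂⟩ => h₁.resolve_right fun he => h₂ (Or.inr he.symm)⟩
    rintro (h' | rfl)
    · exact elt_irrefl x (elt_trans h h')
    · exact elt_irrefl _ h
  le_antisymm := fun x y h₁ h₂ => by
    rcases h₁ with h₁ | h₁
    · rcases h₂ with h₂ | rfl
      exacts [(elt_irrefl x (elt_trans h₁ h₂)).elim, rfl]
    · exact h₁

lemma neg_le (x : EV) : neg ≤ x := by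
  cases x
  exacts [le_rfl, Or.inl trivial, Or.inl trivial]

lemma le_pos (x : EV) : x ≤ pos := by
  cases x
  exacts [Or.inl trivial, Or.inl trivial, le_rfl]

lemma le_neg_iff {x : EV} : x ≤ neg ↔ x = neg :=
  ⟨fun h => le_antisymm h (neg_le x), fun h => h ▸ le_rfl⟩

lemma pos_le_iff {x : EV} : pos ≤ x ↔ x = pos :=
  ⟨fun h => le_antisymm (le_pos x) h, fun h => h ▸ le_rfl⟩

lemma fin_le_total {B C : ℤ → ℕ} (hB : (Function.support B).Finite)
    (hC : (Function.support C).Finite) : fin B ≤ fin C ∨ fin C ≤ fin B := by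
  by_cases hBC : B = C
  · exact Or.inl (hBC ▸ le_rfl)
  have hfin : {q | B q ≠ C q}.Finite :=
    (hB.union hC).subset fun q hq => by
      by_contra h
      simp only [Set.mem_union, Function.mem_support, not_or, not_not] at h
      exact hq (h.1.trans h.2.symm)
  obtain ⟨q, hq, hmax⟩ := hfin.exists_maximal (Function.ne_iff.mp hBC)
  have habove : ∀ r, q < r → B r = C r := fun r hr => by
    by_contra h
    exact (hmax h hr.le).not_gt hr
  rcases Int.even_or_odd q with he | ho <;> rcases lt_or_gt_of_ne hq with h | h
  · exact Or.inl (Or.inl ⟨q, hq, habove, Or.inl ⟨he, h⟩⟩)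
  · exact Or.inr (Or.inl ⟨q, Ne.symm hq, fun r hr => (habove r hr).symm, Or.inl ⟨he, h⟩⟩)
  · exact Or.inr (Or.inl ⟨q, Ne.symm hq, fun r hr => (habove r hr).symm, Or.inr ⟨ho, h⟩⟩)
  · exact Or.inl (Or.inl ⟨q, hq, habove, Or.inr ⟨ho, h⟩⟩)

def addVec (A : ℤ → ℕ) : EV → EV
  | fin B => fin (A + B)
  | x => x

@[simp] lemma addVec_neg (A : ℤ → ℕ) : addVec A neg = neg := rfl

@[simp] lemma addVec_pos (A : ℤ → ℕ) : addVec A pos = pos := rfl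

@[simp] lemma addVec_fin (A B : ℤ → ℕ) : addVec A (fin B) = fin (A + B) := rfl

lemma addVec_zero (x : EV) : addVec 0 x = x := by
  cases x <;> simp

lemma addVec_addVec (A B : ℤ → ℕ) (x : EV) : addVec A (addVec B x) = addVec (A + B) x := by
  cases x <;> simp [add_assoc]

@[simp] lemma addVec_eq_neg_iff {A : ℤ → ℕ} {x : EV} : addVec A x = neg ↔ x = neg := by
  cases x <;> simp

lemma addVec_mono (A : ℤ → ℕ) {x y : EV} (h : x ≤ y) : addVec A x ≤ addVec A y := by
  rcases h with h | rfl
  · refine Or.inl ?_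
    cases x <;> cases y <;> try exact h
    obtain ⟨q, hne, habove, hcmp⟩ := h
    refine ⟨q, by simpa using hne, fun r hr => by simp [habove r hr], ?_⟩
    simp only [Pi.add_apply, add_lt_add_iff_left]
    exact hcmp
  · exact le_rfl

lemma eq_pos_of_addVec_le_self {x : EV} {C : ℤ → ℕ} {q : ℤ} (hq : Even q) (hCq : C q ≠ 0)
    (habove : ∀ r, q < r → C r = 0) (hx : x ≠ neg) (h : addVec C x ≤ x) : x = pos := by
  cases x with
  | neg => exact absurd rfl hx
  | fin B =>
    have hlt : fin B < addVec C (fin B) :=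
      ⟨q, by simp [hCq], fun r hr => by simp [habove r hr], Or.inl ⟨hq, by simp; omega⟩⟩
    exact absurd h hlt.not_ge
  | pos => rfl

end EV

namespace PGame

variable {V : Type} {G : PGame V} {σ τ τ' : V → V}

lemma play_succ (v : V) (m : ℕ) : G.play σ τ v (m + 1) = G.play σ τ (G.step σ τ v) m :=
  Function.iterate_succ_apply _ _ _

lemma play_succ' (v : V) (m : ℕ) : G.play σ τ v (m + 1) = G.step σ τ (G.play σ τ v m) :=
  Function.iterate_succ_apply' _ _ _

lemma play_add (v : V) (m k : ℕ) : G.play σ τ v (m + k) = G.play σ τ (G.play σ τ v m) k := by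
  rw [play, add_comm, Function.iterate_add_apply]
  rfl

lemma play_of_step_eq_self {x : V} (hx : G.step σ τ x = x) (k : ℕ) : G.play σ τ x k = x :=
  Function.iterate_fixed hx k

lemma step_congr {x : V} (h : τ x = τ' x) : G.step σ τ x = G.step σ τ' x := by
  simp only [step, h]

lemma E_step (hσ : G.Strat0Valid σ) (hτ : G.Strat1Valid τ) (x : V) : G.E x (G.step σ τ x) := by
  unfold step
  cases h : G.isP0 x
  exacts [hτ x h, hσ x h]

lemma play_eq_of_step_eq {v : V}
    (h : ∀ m, G.step σ τ (G.play σ τ v m) = G.step σ τ' (G.play σ τ v m)) :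
    G.play σ τ v = G.play σ τ' v := by
  funext m
  induction m with
  | zero => rfl
  | succ m ih => rw [play_succ', play_succ', ← ih, h]

lemma play_mem_of_E_mem {S : Set V} (hES : ∀ v w, G.E v w → w ∈ S) (hσ : G.Strat0Valid σ)
    (hτ : G.Strat1Valid τ) {v : V} (hv : v ∈ S) (m : ℕ) : G.play σ τ v m ∈ S := by
  cases m with
  | zero => exact hv
  | succ m => exact play_succ' (G := G) v m ▸ hES _ _ (E_step hσ hτ _)

def visits (G : PGame V) (σ τ : V → V) (v : V) (m : ℕ) : ℤ → ℕ :=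
  fun q => ((Finset.range m).filter (fun j => G.p (G.play σ τ v j) = q)).card

lemma visits_zero (v : V) : G.visits σ τ v 0 = 0 := by
  funext q
  simp [visits]

lemma visits_succ (v : V) (m : ℕ) :
    G.visits σ τ v (m + 1) = G.visits σ τ v m + Pi.single (G.p (G.play σ τ v m)) 1 := by
  funext q
  simp only [visits, Finset.card_filter, Finset.sum_range_succ, Pi.add_apply, Pi.single_apply,
    eq_comm (a := q)]

lemma visits_succ_left (v : V) (m : ℕ) :
    G.visits σ τ v (m + 1) = Pi.single (G.p v) 1 + G.visits σ τ (G.step σ τ v) m := by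
  funext q
  simp only [visits, Finset.card_filter, Finset.sum_range_succ', Pi.add_apply, Pi.single_apply,
    eq_comm (a := q), play_succ, add_comm]
  rfl

lemma support_visits_finite (v : V) (m : ℕ) : (Function.support (G.visits σ τ v m)).Finite := by
  refine ((Finset.range m).image fun j => G.p (G.play σ τ v j)).finite_toSet.subset fun q hq => ?_
  obtain ⟨j, hj⟩ := Finset.card_ne_zero.mp hq
  simp only [Finset.mem_filter] at hj
  exact Finset.mem_image.mpr ⟨j, hj.1, hj.2⟩

lemma visits_ne_zero_iff {v : V} {m : ℕ} {q : ℤ} :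
    G.visits σ τ v m q ≠ 0 ↔ ∃ j < m, G.p (G.play σ τ v j) = q := by
  simp [visits]

lemma infOft_step_iff {v : V} {q : ℤ} : InfOft G σ τ (G.step σ τ v) q ↔ InfOft G σ τ v q := by
  refine ⟨fun h n => ?_, fun h n => ?_⟩
  · obtain ⟨m, hm, hq⟩ := h n
    exact ⟨m + 1, by omega, by rwa [play_succ]⟩
  · obtain ⟨m, hm, hq⟩ := h (n + 1)
    obtain ⟨k, rfl⟩ : ∃ k, m = k + 1 := ⟨m - 1, by omega⟩
    exact ⟨k, by omega, by rwa [← play_succ]⟩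

lemma infOft_iff_visits_ne_zero {y : V} {d : ℕ} (hy : Function.IsPeriodicPt (G.step σ τ) d y)
    (hd : 0 < d) {q : ℤ} : InfOft G σ τ y q ↔ G.visits σ τ y d q ≠ 0 := by
  rw [visits_ne_zero_iff]
  refine ⟨fun h => ?_, fun ⟨j, hj, hq⟩ n => ⟨j + d * n, ?_, ?_⟩⟩
  · obtain ⟨m, -, hq⟩ := h 0
    exact ⟨m % d, Nat.mod_lt m hd, by rw [play, hy.iterate_mod_apply]; exact hq⟩
  · nlinarith
  · rw [play, ← hy.iterate_mod_apply, Nat.add_mul_mod_self_left, Nat.mod_eq_of_lt hj]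
    exact hq

end PGame

section Theta

open PGame EV

variable {V : Type} {G : PGame V} {top : V} {σ τ τ' : V → V}

lemma theta_eq_fin_visits {v : V} {N : ℕ} (hN : G.play σ τ v N = top)
    (hmin : ∀ j < N, G.play σ τ v j ≠ top) : theta G top σ τ v = fin (G.visits σ τ v N) := by
  classical
  rw [theta, dif_pos ⟨N, hN⟩]
  unfold visits
  congr!
  rw [Nat.find_eq_iff]
  exact ⟨hN, hmin⟩

lemma theta_top : theta G top σ τ top = fin 0 := by
  rw [theta_eq_fin_visits (top := top) (v := top) (N := 0) rfl (by simp), visits_zero]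

lemma theta_eq_pos_or_neg {v : V} (h : ∀ n, G.play σ τ v n ≠ top) :
    theta G top σ τ v = pos ∨ theta G top σ τ v = neg := by
  rw [theta, dif_neg (not_exists.mpr h)]
  split_ifs <;> simp

lemma theta_eq_pos_iff {v : V} : theta G top σ τ v = pos ↔ (∀ n, G.play σ τ v n ≠ top) ∧
    ∃ q, InfOft G σ τ v q ∧ Even q ∧ ∀ q', InfOft G σ τ v q' → q' ≤ q := by
  unfold theta
  split_ifs with h₁ h₂ <;> simp_all

lemma support_finite_of_theta_eq_fin {v : V} {B : ℤ → ℕ} (h : theta G top σ τ v = fin B) :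
    (Function.support B).Finite := by
  unfold theta at h
  split_ifs at h
  cases h
  exact support_visits_finite _ _

lemma theta_le_total (v : V) :
    theta G top σ τ v ≤ theta G top σ τ' v ∨ theta G top σ τ' v ≤ theta G top σ τ v := by
  rcases hx : theta G top σ τ v with _ | B | _ <;> rcases hy : theta G top σ τ' v with _ | C | _
  all_goals try first
    | exact Or.inl (neg_le _) | exact Or.inr (neg_le _)
    | exact Or.inl (le_pos _) | exact Or.inr (le_pos _)
  exact fin_le_total (support_finite_of_theta_eq_fin hx) (support_finite_of_theta_eq_fin hy)

lemma theta_congr {v : V} (h : G.play σ τ v = G.play σ τ' v) :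
    theta G top σ τ v = theta G top σ τ' v := by
  unfold theta InfOft
  rw [h]

lemma theta_step_of_not_reach {x : V} (h : ∀ n, G.play σ τ x n ≠ top) :
    theta G top σ τ (G.step σ τ x) = theta G top σ τ x := by
  have h' : ∀ n, G.play σ τ (G.step σ τ x) n ≠ top := fun n => play_succ (G := G) x n ▸ h (n + 1)
  have hpos : theta G top σ τ (G.step σ τ x) = pos ↔ theta G top σ τ x = pos := by
    simp only [theta_eq_pos_iff, infOft_step_iff, h, h', ne_eq, not_false_eq_true, implies_true,
      true_and]
  rcases theta_eq_pos_or_neg h with hx | hx <;> rcases theta_eq_pos_or_neg h' with hy | hy <;>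
    simp_all

lemma theta_step {x : V} (hx : x ≠ top) :
    theta G top σ τ x = addVec (Pi.single (G.p x) 1) (theta G top σ τ (G.step σ τ x)) := by
  classical
  by_cases h : ∃ n, G.play σ τ (G.step σ τ x) n = top
  · have hmin : ∀ j < Nat.find h + 1, G.play σ τ x j ≠ top := by
      rintro (_ | j) hj
      exacts [hx, play_succ (G := G) x j ▸ Nat.find_min h (by omega)]
    rw [theta_eq_fin_visits (Nat.find_spec h) (fun j hj => Nat.find_min h hj),
      theta_eq_fin_visits ((play_succ x _).trans (Nat.find_spec h)) hmin, visits_succ_left,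
      addVec_fin]
  · have h' : ∀ n, G.play σ τ x n ≠ top := by
      rintro (_ | n) hn
      exacts [hx hn, h ⟨n, (play_succ x n).symm.trans hn⟩]
    rw [theta_step_of_not_reach h']
    rcases theta_eq_pos_or_neg h' with hx | hx <;> rw [hx] <;> rfl

lemma theta_play_of_not_reach {v : V} (h : ∀ n, G.play σ τ v n ≠ top) (m : ℕ) :
    theta G top σ τ (G.play σ τ v m) = theta G top σ τ v := by
  induction m with
  | zero => rfl
  | succ m ih =>
    rw [play_succ', theta_step_of_not_reach fun n => by rw [← play_add]; exact h _, ih]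

lemma theta_play_eq_neg {v : V} (h : theta G top σ τ v = neg) (m : ℕ) :
    theta G top σ τ (G.play σ τ v m) = neg := by
  induction m with
  | zero => exact h
  | succ m ih =>
    have hne : G.play σ τ v m ≠ top := fun he => by simp [he, theta_top] at ih
    rw [play_succ']
    rwa [theta_step hne, addVec_eq_neg_iff] at ih

lemma theta_eq_neg_of_play (htop : G.step σ τ top = top) {v : V} {m : ℕ}
    (h : theta G top σ τ (G.play σ τ v m) = neg) : theta G top σ τ v = neg := by
  induction m generalizing v with
  | zero => exact h
  | succ m ih =>
    have hv : v ≠ top := by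
      rintro rfl
      simp [play_of_step_eq_self htop, theta_top] at h
    rw [theta_step hv, ih (by rwa [← play_succ]), addVec_neg]

lemma exists_even_top_of_theta_eq_pos {y : V} {d : ℕ}
    (hy : Function.IsPeriodicPt (G.step σ τ) d y) (hd : 0 < d) (hpos : theta G top σ τ y = pos) :
    ∃ q, Even q ∧ G.visits σ τ y d q ≠ 0 ∧ ∀ r, q < r → G.visits σ τ y d r = 0 := by
  obtain ⟨-, q, hq, heven, hmax⟩ := theta_eq_pos_iff.mp hpos
  refine ⟨q, heven, (infOft_iff_visits_ne_zero hy hd).mp hq, fun r hr => ?_⟩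
  by_contra hne
  exact (hmax r ((infOft_iff_visits_ne_zero hy hd).mpr hne)).not_gt hr

lemma theta_lt_of_max_priority {q : ℤ} (hq : Even q) (hmax : ∀ x, G.p x ≤ q)
    (htop : G.step σ τ top = top) {v : V} (hreach : ∃ N, G.play σ τ v N = top) {s : ℕ}
    (hs : G.play σ τ v s ≠ top) (hps : G.p (G.play σ τ v s) = q)
    (hreach' : ∃ N, G.play σ τ' v N = top) (havoid : ∀ j, G.p (G.play σ τ' v j) ≠ q) :
    theta G top σ τ' v < theta G top σ τ v := by
  classical
  have hs' : s < Nat.find hreach := by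
    by_contra h
    refine hs ?_
    rw [← Nat.add_sub_of_le (not_lt.mp h), play_add, Nat.find_spec hreach,
      play_of_step_eq_self htop]
  rw [theta_eq_fin_visits (Nat.find_spec hreach) fun j hj => Nat.find_min hreach hj,
    theta_eq_fin_visits (Nat.find_spec hreach') fun j hj => Nat.find_min hreach' hj]
  have hzero : ∀ (τ'' : V → V) (N : ℕ) (r : ℤ), q < r → G.visits σ τ'' v N r = 0 :=
    fun τ'' N r hr => by
      by_contra h
      obtain ⟨j, -, hj⟩ := visits_ne_zero_iff.mp h
      exact (hmax _).not_gt (hj ▸ hr)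
  have h' : G.visits σ τ' v (Nat.find hreach') q = 0 := by
    by_contra h
    obtain ⟨j, -, hj⟩ := visits_ne_zero_iff.mp h
    exact havoid j hj
  have h : G.visits σ τ v (Nat.find hreach) q ≠ 0 := visits_ne_zero_iff.mpr ⟨s, hs', hps⟩
  exact ⟨q, by omega, fun r hr => by rw [hzero _ _ r hr, hzero _ _ r hr], Or.inl ⟨hq, by omega⟩⟩

end Theta

section OptimalCounter

open PGame EV

variable {V : Type} {G : PGame V} {top : V} {σ τ : V → V}

lemma addVec_visits_le {f : V → EV} {v : V} {m : ℕ}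
    (hloc : ∀ j < m, addVec (Pi.single (G.p (G.play σ τ v j)) 1) (f (G.play σ τ v (j + 1))) ≤
      f (G.play σ τ v j)) :
    addVec (G.visits σ τ v m) (f (G.play σ τ v m)) ≤ f v := by
  induction m with
  | zero => rw [visits_zero, addVec_zero]; rfl
  | succ m ih =>
    calc addVec (G.visits σ τ v (m + 1)) (f (G.play σ τ v (m + 1)))
        = addVec (G.visits σ τ v m)
            (addVec (Pi.single (G.p (G.play σ τ v m)) 1) (f (G.play σ τ v (m + 1)))) := by
          rw [visits_succ, addVec_addVec]
      _ ≤ addVec (G.visits σ τ v m) (f (G.play σ τ v m)) := addVec_mono _ (hloc m (by omega))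
      _ ≤ f v := ih fun j hj => hloc j (by omega)

theorem optCounter1_of_le {τbar : V → V} (f : V → EV) (hτbar : G.Strat1Valid τbar)
    (htop : G.step σ τbar top = top)
    (hper : ∀ v, ∃ l d, 0 < d ∧ Function.IsPeriodicPt (G.step σ τbar) d (G.play σ τbar v l))
    (hle : ∀ τ, G.Strat1Valid τ → ∀ v, f v ≤ theta G top σ τ v) (hftop : f top = fin 0)
    (hloc : ∀ x, x ≠ top → f x ≠ neg →
      addVec (Pi.single (G.p x) 1) (f (G.step σ τbar x)) ≤ f x)
    (hneg : ∀ x, f x = neg → theta G top σ τbar x = neg) :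
    OptCounter1 G top σ τbar := by
  refine ⟨hτbar, fun τ hτ v => ?_⟩
  by_cases hN : ∃ m, f (G.play σ τbar v m) = neg
  · obtain ⟨m, hm⟩ := hN
    rw [theta_eq_neg_of_play htop (hneg _ hm)]
    exact neg_le _
  push Not at hN
  have hloc' : ∀ j, G.play σ τbar v j ≠ top → addVec (Pi.single (G.p (G.play σ τbar v j)) 1)
      (f (G.play σ τbar v (j + 1))) ≤ f (G.play σ τbar v j) := fun j hj =>
    play_succ' (G := G) v j ▸ hloc _ hj (hN j)
  by_cases hreach : ∃ N, G.play σ τbar v N = top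
  · classical
    have hmin : ∀ j < Nat.find hreach, G.play σ τbar v j ≠ top := fun j hj => Nat.find_min hreach hj
    rw [theta_eq_fin_visits (Nat.find_spec hreach) hmin]
    calc fin (G.visits σ τbar v (Nat.find hreach))
        = addVec (G.visits σ τbar v (Nat.find hreach)) (f (G.play σ τbar v (Nat.find hreach))) := by
          rw [Nat.find_spec hreach, hftop, addVec_fin, add_zero]
      _ ≤ f v := addVec_visits_le fun j hj => hloc' j (hmin j hj)
      _ ≤ theta G top σ τ v := hle τ hτ v
  push Not at hreach
  rcases theta_eq_pos_or_neg hreach with hpos | hneg'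
  swap
  · rw [hneg']
    exact neg_le _
  obtain ⟨l, d, hd, hy⟩ := hper v
  set y := G.play σ τbar v l
  obtain ⟨q, hq, hCq, habove⟩ := exists_even_top_of_theta_eq_pos hy hd
    ((theta_play_of_not_reach hreach l).trans hpos)
  have hcycle : addVec (G.visits σ τbar y d) (f y) ≤ f y := by
    have h := addVec_visits_le (G := G) (σ := σ) (τ := τbar) (v := y) (m := d) (f := f)
      fun j _ => by simpa only [y, ← play_add, ← add_assoc] using hloc' (l + j) (hreach _)
    rwa [show G.play σ τbar y d = y from hy] at h
  have hfy : f y = pos := eq_pos_of_addVec_le_self hq hCq habove (hN l) hcycle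
  have hfv := addVec_visits_le (v := v) (m := l) (f := f) fun j _ => hloc' j (hreach j)
  rw [show G.play σ τbar v l = y from rfl, hfy, addVec_pos] at hfv
  rw [hpos, pos_le_iff.mp (hfv.trans (hle τ hτ v))]
  exact le_refl pos

variable {S : Set V}

lemma step_top_eq (hσ : G.Strat0Valid σ) (hτ : G.Strat1Valid τ)
    (htop : ∀ w, G.E top w → w = top) : G.step σ τ top = top :=
  htop _ (E_step hσ hτ top)

lemma exists_isPeriodicPt_play (hσ : G.Strat0Valid σ) (hτ : G.Strat1Valid τ) (hS : S.Finite)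
    (hES : ∀ v w, G.E v w → w ∈ S) (v : V) :
    ∃ l d, 0 < d ∧ Function.IsPeriodicPt (G.step σ τ) d (G.play σ τ v l) := by
  obtain ⟨a, b, hab, heq⟩ := Set.Finite.exists_lt_map_eq_of_forall_mem
    (f := fun m => G.play σ τ v (m + 1))
    (fun m => play_succ' (G := G) v m ▸ hES _ _ (E_step hσ hτ _)) hS
  refine ⟨a + 1, b - a, by omega, ?_⟩
  change G.play σ τ (G.play σ τ v (a + 1)) (b - a) = _
  rw [← play_add, show a + 1 + (b - a) = b + 1 by omega]
  exact heq.symm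

/-- Play values depend only on the moves at the finitely many nodes a play can visit. -/
lemma theta_image_finite (hσ : G.Strat0Valid σ) (hS : S.Finite) (hES : ∀ v w, G.E v w → w ∈ S)
    (v : V) : ((fun τ => theta G top σ τ v) '' {τ | G.Strat1Valid τ}).Finite := by
  have : Finite ↥(insert v S) := (hS.insert v).to_subtype
  have : Finite S := hS.to_subtype
  let r : {τ // G.Strat1Valid τ} → ↥(insert v S) → ↥S := fun τ x =>
    ⟨G.step σ τ.1 x, hES _ _ (E_step hσ τ.2 x)⟩
  have hfac :
      Function.FactorsThrough (fun τ : {τ // G.Strat1Valid τ} => theta G top σ τ.1 v) r := by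
    intro τ τ' h
    refine theta_congr (play_eq_of_step_eq fun m => ?_)
    have hm := play_mem_of_E_mem (fun _ _ h => Set.mem_insert_of_mem v (hES _ _ h)) hσ τ.2
      (Set.mem_insert v S) m
    exact congrArg Subtype.val (congrFun h ⟨_, hm⟩)
  refine (Set.finite_range
    (Function.extend r (fun τ => theta G top σ τ.1 v) fun _ => neg)).subset ?_
  rintro _ ⟨τ, hτ, rfl⟩
  exact ⟨r ⟨τ, hτ⟩, hfac.extend_apply _ ⟨τ, hτ⟩⟩

lemma exists_theta_min (hσ : G.Strat0Valid σ) (hS : S.Finite) (hES : ∀ v w, G.E v w → w ∈ S)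
    {τ₀ : V → V} (hτ₀ : G.Strat1Valid τ₀) (v : V) :
    ∃ τ, G.Strat1Valid τ ∧ ∀ τ', G.Strat1Valid τ' → theta G top σ τ v ≤ theta G top σ τ' v := by
  obtain ⟨τ, hτ, hmin⟩ := Set.Finite.exists_minimalFor' (fun τ => theta G top σ τ v) _
    (theta_image_finite hσ hS hES v) ⟨τ₀, hτ₀⟩
  exact ⟨τ, hτ, fun τ' hτ' => (theta_le_total v).elim id fun h => hmin hτ' h⟩

end OptimalCounter

section Existence

open PGame EV

variable {V : Type} {G : PGame V} {top : V} {σ : V → V}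

lemma exists_theta_eq_neg_of_or (hσ : G.Strat0Valid σ) (htop : ∀ w, G.E top w → w = top)
    {τ₁ τ₂ : V → V} (h₁ : G.Strat1Valid τ₁) (h₂ : G.Strat1Valid τ₂) :
    ∃ τ, G.Strat1Valid τ ∧ ∀ x, theta G top σ τ₁ x = neg ∨ theta G top σ τ₂ x = neg →
      theta G top σ τ x = neg := by
  classical
  let τ : V → V := fun x => if theta G top σ τ₁ x = neg then τ₁ x else τ₂ x
  have hτ : G.Strat1Valid τ := fun x hx => by
    dsimp only [τ]
    split_ifs
    exacts [h₁ x hx, h₂ x hx]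
  -- a `τ₁`-play that starts at value `-∞` keeps that value, so `τ` follows `τ₁` along it
  have hfirst : ∀ x, theta G top σ τ₁ x = neg → theta G top σ τ x = neg := fun x hx =>
    (theta_congr (play_eq_of_step_eq fun m => step_congr
      (if_pos (theta_play_eq_neg hx m)).symm)).symm.trans hx
  refine ⟨τ, hτ, fun x hx => hx.elim (hfirst x) fun hx₂ => ?_⟩
  by_cases hm : ∃ m, theta G top σ τ₁ (G.play σ τ x m) = neg
  · obtain ⟨m, hm⟩ := hm
    exact theta_eq_neg_of_play (step_top_eq hσ hτ htop) (hfirst _ hm)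
  · push Not at hm
    exact (theta_congr (play_eq_of_step_eq fun m => step_congr (if_neg (hm m)))).trans hx₂

lemma exists_theta_eq_neg_on (hσ : G.Strat0Valid σ) (htop : ∀ w, G.E top w → w = top)
    {τ₀ : V → V} (hτ₀ : G.Strat1Valid τ₀) (F : Finset V) :
    ∃ τ, G.Strat1Valid τ ∧ ∀ x ∈ F, ∀ τ', G.Strat1Valid τ' →
      theta G top σ τ' x = neg → theta G top σ τ x = neg := by
  classical
  induction F using Finset.induction_on with
  | empty => exact ⟨τ₀, hτ₀, by simp⟩
  | insert x F _ ih =>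
    obtain ⟨τF, hτF, hF⟩ := ih
    by_cases hx : ∃ τx, G.Strat1Valid τx ∧ theta G top σ τx x = neg
    · obtain ⟨τx, hτx, hxneg⟩ := hx
      obtain ⟨τ, hτ, hor⟩ := exists_theta_eq_neg_of_or hσ htop hτF hτx
      refine ⟨τ, hτ, fun y hy τ' hτ' hy' => hor y ?_⟩
      rcases Finset.mem_insert.mp hy with rfl | hy
      exacts [Or.inr hxneg, Or.inl (hF y hy τ' hτ' hy')]
    · refine ⟨τF, hτF, fun y hy τ' hτ' hy' => ?_⟩
      rcases Finset.mem_insert.mp hy with rfl | hy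
      exacts [(hx ⟨τ', hτ', hy'⟩).elim, hF y hy τ' hτ' hy']

theorem exists_optCounter1 {S : Set V} (hσ : G.Strat0Valid σ) (htop : ∀ w, G.E top w → w = top)
    (hS : S.Finite) (hES : ∀ v w, G.E v w → w ∈ S) {τ₀ : V → V} (hτ₀ : G.Strat1Valid τ₀) :
    ∃ τbar, OptCounter1 G top σ τbar := by
  classical
  choose τmin hτmin hτmin_le using exists_theta_min (top := top) hσ hS hES hτ₀
  obtain ⟨τneg, hτneg, hτneg_le⟩ := exists_theta_eq_neg_on hσ htop hτ₀ hS.toFinset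
  let val : V → EV := fun x => theta G top σ (τmin x) x
  -- pointwise minimisers alone might close an even cycle among nodes of value `-∞`
  let τbar : V → V := fun x => if x ∈ S ∧ val x = neg then τneg x else τmin x x
  have hτbar : G.Strat1Valid τbar := fun x hx => by
    dsimp only [τbar]
    split_ifs
    exacts [hτneg x hx, hτmin x x hx]
  have hnegS : ∀ x ∈ S, val x = neg → theta G top σ τbar x = neg := fun x hxS hx => by
    have hx' := hτneg_le x (hS.mem_toFinset.mpr hxS) (τmin x) (hτmin x) hx
    refine (theta_congr (play_eq_of_step_eq fun m => step_congr ?_)).symm.trans hx'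
    have hm := le_neg_iff.mp ((hτmin_le _ τneg hτneg).trans_eq (theta_play_eq_neg hx' m))
    exact (if_pos (And.intro (play_mem_of_E_mem hES hσ hτneg hxS m) hm)).symm
  have hneg : ∀ x, val x = neg → theta G top σ τbar x = neg := fun x hx => by
    by_cases hxS : x ∈ S
    · exact hnegS x hxS hx
    have hxtop : x ≠ top := by
      rintro rfl
      simp [val, theta_top] at hx
    have hnext : theta G top σ (τmin x) (G.step σ (τmin x) x) = neg := by
      rwa [show val x = _ from theta_step hxtop, addVec_eq_neg_iff] at hx
    rw [theta_step hxtop, step_congr (if_neg fun h => hxS h.1),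
      hnegS _ (hES _ _ (E_step hσ (hτmin x) x))
        (le_neg_iff.mp ((hτmin_le _ _ (hτmin x)).trans_eq hnext)), addVec_neg]
  refine ⟨τbar, optCounter1_of_le val hτbar (step_top_eq hσ hτbar htop)
    (exists_isPeriodicPt_play hσ hτbar hS hES) (fun τ hτ x => hτmin_le x τ hτ) theta_top
    (fun x hx hxv => ?_) hneg⟩
  rw [step_congr (if_neg fun h => hxv h.2)]
  exact (addVec_mono _ (hτmin_le _ _ (hτmin x))).trans_eq (theta_step hx).symm

end Existence

section GameN

open PGame EV

variable {n : ℕ}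

lemma gameN_E_eq_sink {b : Bool} {i : ℕ} {w : VN} (hi : ¬(1 ≤ i ∧ i ≤ n))
    (h : (GameN n).E (b, i) w) : w = (true, n + 1) := by
  change EN n (b, i) w at h
  cases b <;> simp only [EN] at h <;> split_ifs at h <;> first | exact h | omega

lemma gameN_E_true_cases {i : ℕ} {w : VN} (hi : 1 ≤ i ∧ i ≤ n) (h : (GameN n).E (true, i) w) :
    w = (true, i + 1) ∨ w = (false, i + 1) ∨ (2 ≤ i ∧ w = (true, 1)) := by
  change EN n (true, i) w at h
  simp only [EN] at h
  split_ifs at h with h₁ h₂ h₃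
  · omega
  · subst h₂
    tauto
  · tauto
  · omega

lemma gameN_E_sink {b : Bool} {i : ℕ} (hi : ¬(1 ≤ i ∧ i ≤ n)) :
    (GameN n).E (b, i) (true, n + 1) := by
  show EN n _ _
  cases b <;> simp only [EN] <;> split_ifs <;> first | rfl | omega

lemma gameN_E_false_succ {k : ℕ} (hk : 1 ≤ k ∧ k ≤ n) :
    (GameN n).E (false, k) (false, k + 1) := by
  show EN n (false, k) (false, k + 1)
  simp only [EN]
  split_ifs <;> first | omega | simp_all

lemma gameN_E_false_true_succ {k : ℕ} (hk : 1 ≤ k ∧ k ≤ n) :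
    (GameN n).E (false, k) (true, k + 1) := by
  show EN n (false, k) (true, k + 1)
  simp only [EN]
  split_ifs <;> first | omega | simp_all

lemma gameN_E_snd_le {v w : VN} (h : (GameN n).E v w) : w.2 ≤ n + 1 := by
  change EN n v w at h
  obtain ⟨_ | _, i⟩ := v <;> simp only [EN] at h <;> split_ifs at h <;>
    rcases h with rfl | rfl | rfl <;> simp <;> omega

variable {σ τ : VN → VN}

lemma gameN_step_true (i : ℕ) : (GameN n).step σ τ (true, i) = σ (true, i) := rfl

lemma gameN_step_false (i : ℕ) : (GameN n).step σ τ (false, i) = τ (false, i) := rfl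

lemma gameN_E_top (w : VN) (h : (GameN n).E (true, n + 1) w) : w = (true, n + 1) :=
  gameN_E_eq_sink (i := n + 1) (by omega) h

lemma pN_le_max (v : VN) : pN n v ≤ 2 * n + 4 := by
  obtain ⟨_ | _, i⟩ := v <;> simp only [pN] <;> split_ifs <;> omega

lemma pN_ne_max {v : VN} (hv : v ≠ (false, n + 1)) : pN n v ≠ 2 * n + 4 := by
  obtain ⟨_ | _, i⟩ := v <;> simp only [pN, ne_eq, Prod.mk.injEq, true_and] at hv ⊢ <;>
    split_ifs <;> omega

lemma pN_max : pN n (false, n + 1) = 2 * n + 4 := by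
  simp only [pN, if_pos (show 1 ≤ n + 1 ∧ n + 1 ≤ n + 1 by omega)]
  push_cast
  ring

def tauEscape (n : ℕ) : VN → VN
  | (false, k) => if 1 ≤ k ∧ k < n then (false, k + 1) else (true, n + 1)
  | (true, _) => (true, n + 1)

lemma tauEscape_valid (hn : 1 ≤ n) : (GameN n).Strat1Valid (tauEscape n) := by
  rintro ⟨_ | _, k⟩ hk
  · simp only [tauEscape]
    split_ifs with h
    · exact gameN_E_false_succ ⟨h.1, h.2.le⟩
    · by_cases hkn : k = n
      · subst hkn
        exact gameN_E_false_true_succ ⟨hn, le_rfl⟩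
      · exact gameN_E_sink (i := k) (by omega)
  · simp [GameN] at hk

lemma play_tauEscape (hσ : (GameN n).Strat0Valid σ) {k : ℕ} (hk : 1 ≤ k) (j : ℕ) :
    (GameN n).play σ (tauEscape n) (false, k) j =
      if j ≤ n - k then (false, k + j) else (true, n + 1) := by
  induction j with
  | zero => simp [play]
  | succ j ih =>
    rw [play_succ', ih]
    split_ifs
    · simp only [gameN_step_false, tauEscape, if_pos (show 1 ≤ k + j ∧ k + j < n by omega)]
      rfl
    · simp only [gameN_step_false, tauEscape, if_neg (show ¬(1 ≤ k + j ∧ k + j < n) by omega)]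
    · omega
    · exact gameN_E_top _ (hσ _ rfl)

/-- From `d_k`, `tauEscape` reaches the sink without the largest priority `2n+4`, which is even. -/
lemma play_ne_dTop_of_optCounter1 (hn : 1 ≤ n) (hσ : (GameN n).Strat0Valid σ)
    (hopt : OptCounter1 (GameN n) (true, n + 1) σ τ) {k : ℕ} (hk : 1 ≤ k ∧ k ≤ n) (s : ℕ) :
    (GameN n).play σ τ (false, k) s ≠ (false, n + 1) := by
  intro hs
  apply lt_irrefl (theta (GameN n) (true, n + 1) σ τ (false, k))
  refine lt_of_le_of_lt (hopt.2 _ (tauEscape_valid hn) _)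
    (theta_lt_of_max_priority (q := 2 * n + 4) ⟨n + 2, by ring⟩ pN_le_max
      (step_top_eq hσ hopt.1 gameN_E_top) (s := s) ⟨s + 1, ?_⟩ (by simp [hs])
      (by rw [hs]; exact pN_max)
      ⟨n - k + 1, ?_⟩ fun j => ?_)
  · rw [play_succ', hs]
    exact gameN_E_eq_sink (by omega) (hopt.1 _ rfl)
  · rw [play_tauEscape hσ hk.1, if_neg (by omega)]
  · rw [play_tauEscape hσ hk.1]
    split_ifs
    · exact pN_ne_max (n := n) (v := (false, k + j)) (by simp; omega)
    · exact pN_ne_max (n := n) (v := (true, n + 1)) (by simp)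

end GameN

section SigmaStar

open PGame

variable {n : ℕ} {σ τ : VN → VN}

/-- A move back to `a_1` would make the play cycle, and a move to a free `d_k` contradicts
`play_ne_dTop_of_optCounter1`. -/
lemma play_eq_of_lt_first_dTop (hn : 1 ≤ n) (hσ : (GameN n).Strat0Valid σ)
    (hopt : OptCounter1 (GameN n) (true, n + 1) σ τ) {m : ℕ}
    (hm : (GameN n).play σ τ (true, 1) m = (false, n + 1))
    (hmin : ∀ t < m, (GameN n).play σ τ (true, 1) t ≠ (false, n + 1)) :
    ∀ t < m, (GameN n).play σ τ (true, 1) t = (true, t + 1) := by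
  intro t
  induction t with
  | zero => exact fun _ => rfl
  | succ t ih =>
    intro ht
    have hnext : (GameN n).play σ τ (true, 1) (t + 1) = σ (true, t + 1) := by
      rw [play_succ', ih (by omega), gameN_step_true]
    have hrest : (GameN n).play σ τ ((GameN n).play σ τ (true, 1) (t + 1)) (m - (t + 1)) =
        (false, n + 1) := by
      rw [← play_add, Nat.add_sub_of_le ht.le, hm]
    by_cases hi : 1 ≤ t + 1 ∧ t + 1 ≤ n
    · rcases gameN_E_true_cases hi (hσ (true, t + 1) rfl) with h | h | ⟨-, h⟩
      · rw [hnext, h]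
      · by_cases htn : t + 1 = n
        · exact absurd (hnext.trans (h.trans (by rw [htn]))) (hmin _ ht)
        · rw [hnext, h] at hrest
          exact absurd hrest (play_ne_dTop_of_optCounter1 hn hσ hopt (by omega) _)
      · rw [hnext, h] at hrest
        exact absurd hrest (hmin _ (by omega))
    · rw [hnext, gameN_E_eq_sink hi (hσ (true, t + 1) rfl),
        play_of_step_eq_self (step_top_eq hσ hopt.1 gameN_E_top)] at hrest
      exact absurd hrest (by simp)

lemma eq_sigmaStar_of_play_eq_dTop (hn : 1 ≤ n) (hσ : (GameN n).Strat0Valid σ)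
    (hopt : OptCounter1 (GameN n) (true, n + 1) σ τ)
    (hreach : ∃ m, (GameN n).play σ τ (true, 1) m = (false, n + 1)) :
    ∀ v : VN, v.1 = true → σ v = sigmaStar n v := by
  classical
  have hpath := play_eq_of_lt_first_dTop hn hσ hopt (Nat.find_spec hreach)
    fun t ht => Nat.find_min hreach ht
  have hσ_of_lt : ∀ t < Nat.find hreach, σ (true, t + 1) = (GameN n).play σ τ (true, 1) (t + 1) :=
    fun t ht => by rw [play_succ', hpath t ht, gameN_step_true]
  obtain ⟨m, hm⟩ : ∃ m, Nat.find hreach = m + 1 := by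
    refine Nat.exists_eq_succ_of_ne_zero fun h => ?_
    have h0 := Nat.find_spec hreach
    rw [h] at h0
    cases h0
  have hσm : σ (true, m + 1) = (false, n + 1) := by
    rw [hσ_of_lt m (by omega), ← hm, Nat.find_spec hreach]
  have hmn : m + 1 = n := by
    by_cases hi : 1 ≤ m + 1 ∧ m + 1 ≤ n
    · rcases gameN_E_true_cases hi (hσ (true, m + 1) rfl) with h | h | ⟨-, h⟩ <;> rw [hσm] at h <;>
        simp_all
    · simpa using hσm.symm.trans (gameN_E_eq_sink hi (hσ (true, m + 1) rfl))
  rintro ⟨_ | _, i⟩ hv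
  · exact absurd hv Bool.false_ne_true
  simp only [sigmaStar]
  split_ifs with h₁ h₂
  · obtain ⟨t, rfl⟩ : ∃ t, i = t + 1 := ⟨i - 1, by omega⟩
    rw [hσ_of_lt t (by omega), hpath (t + 1) (by omega)]
  · rw [h₂, ← hmn, hσm, hmn]
  · exact gameN_E_eq_sink (by omega) (hσ _ rfl)

lemma play_eq_dTop_of_eq_sigmaStar (h : ∀ v : VN, v.1 = true → σ v = sigmaStar n v) {i : ℕ}
    (hi : 1 ≤ i ∧ i ≤ n) : (GameN n).play σ τ (true, i) (n - i + 1) = (false, n + 1) := by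
  have hclimb : ∀ t ≤ n - i, (GameN n).play σ τ (true, i) t = (true, i + t) := by
    intro t
    induction t with
    | zero => exact fun _ => rfl
    | succ t ih =>
      intro ht
      rw [play_succ', ih (by omega), gameN_step_true, h _ rfl]
      simp only [sigmaStar, if_pos (show 1 ≤ i + t ∧ i + t < n by omega)]
      rfl
  rw [play_succ', hclimb _ le_rfl, gameN_step_true, h _ rfl, Nat.add_sub_of_le hi.2]
  simp [sigmaStar]

lemma setOf_sigmaStar_ne_sigma0 (n : ℕ) :
    {v : VN | v.1 = true ∧ sigmaStar n v ≠ sigma0 n v} = {(true, n)} := by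
  ext ⟨_ | _, i⟩
  · simp
  · simp only [sigmaStar, sigma0, Set.mem_ofPred_eq, Set.mem_singleton_iff, Prod.mk.injEq]
    split_ifs <;> simp <;> omega

end SigmaStar

/-- In `G_n`, the unique player 0 strategy for which the play from every starting node
`a_i` under `σ` and any optimal player 1 response passes through `d_{n+1}` is
`σ*` (with `σ*(a_i) = a_{i+1}` for `i < n` and `σ*(a_n) = d_{n+1}`); it differs from the
initial strategy `σ₀` in exactly one edge (at `a_n`). -/
theorem stmt11 (n : ℕ) (hn : 1 ≤ n) :
    (∀ σ : VN → VN, (GameN n).Strat0Valid σ →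
      ((∀ σbar, OptCounter1 (GameN n) (true, n + 1) σ σbar →
          ∀ i : ℕ, 1 ≤ i → i ≤ n →
            ∃ m, (GameN n).play σ σbar (true, i) m = (false, n + 1)) ↔
        (∀ v : VN, v.1 = true → σ v = sigmaStar n v))) ∧
    {v : VN | v.1 = true ∧ sigmaStar n v ≠ sigma0 n v} = {(true, n)} := by
  refine ⟨fun σ hσ => ⟨fun h => ?_, fun h σbar _ i hi hin =>
    ⟨n - i + 1, play_eq_dTop_of_eq_sigmaStar h ⟨hi, hin⟩⟩⟩, setOf_sigmaStar_ne_sigma0 n⟩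
  obtain ⟨τbar, hopt⟩ := exists_optCounter1 hσ gameN_E_top
    (Set.finite_univ.prod (Set.finite_Iic (n + 1))) (fun _ w h => ⟨trivial, gameN_E_snd_le h⟩)
    (tauEscape_valid hn)
  exact eq_sigmaStar_of_play_eq_dTop hn hσ hopt (h τbar hopt 1 le_rfl hn)
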